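/- arXiv:1703.01612 — 6 statements merged into one kernel-verified Lean document; each statement's English description precedes it below -/
import Mathlib

section
/- Let X be a real-valued random variable, and let a, b be real numbers with a < b such that X almost surely takes no values in the open interval (a,b). If the mean μ = E[X] satisfies a < μ < b, then the variance of X satisfies Var(X) ≥ (μ - a)(b - μ). -/
/-! Since `X` a.s. avoids `(a, b)`, the quadratic `(X - a) * (X - b)` is a.s. nonnegative, and its
expectation `E[X²] - (a + b) μ + a b` is exactly `Var X - (μ - a) (b - μ)`. -/

open MeasureTheory

lemma sub_mul_sub_nonneg_of_notMem_Ioo {a b x : ℝ} (hab : a ≤ b) (hx : x ∉ Set.Ioo a b) :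
    0 ≤ (x - a) * (x - b) := by
  rcases le_or_gt x a with hxa | hax
  · exact mul_nonneg_of_nonpos_of_nonpos (by linarith) (by linarith)
  · have hbx : b ≤ x := le_of_not_gt fun hxb => hx ⟨hax, hxb⟩
    exact mul_nonneg (by linarith) (by linarith)

section

variable {Ω : Type*} [MeasurableSpace Ω] {P : Measure Ω} {X : Ω → ℝ}

lemma integral_sub_mul_sub_nonneg_of_measure_Ioo_eq_zero {a b : ℝ} (hab : a ≤ b)
    (h0 : P {ω | X ω ∈ Set.Ioo a b} = 0) :
    0 ≤ ∫ ω, (X ω - a) * (X ω - b) ∂P := by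
  refine integral_nonneg_of_ae ?_
  filter_upwards [measure_eq_zero_iff_ae_notMem.mp h0] with ω hω
  exact sub_mul_sub_nonneg_of_notMem_Ioo hab hω

lemma integral_sub_mul_sub [IsProbabilityMeasure P] (hX : MemLp X 2 P) (a b : ℝ) :
    ∫ ω, (X ω - a) * (X ω - b) ∂P
      = (∫ ω, X ω ^ 2 ∂P) - (a + b) * (∫ ω, X ω ∂P) + a * b := by
  have hX1 : Integrable X P := hX.integrable one_le_two
  have hX2 : Integrable (fun ω => X ω ^ 2) P := hX.integrable_sq
  have hexpand : ∀ ω, (X ω - a) * (X ω - b) = X ω ^ 2 - (a + b) * X ω + a * b := fun ω => by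
    ring
  simp_rw [hexpand]
  have hlin : Integrable (fun ω => X ω ^ 2 - (a + b) * X ω) P := hX2.sub (hX1.const_mul _)
  rw [integral_add hlin (integrable_const _),
    integral_sub hX2 (hX1.const_mul _), integral_const_mul, integral_const, probReal_univ,
    one_smul]

end

theorem stmt_0_general {Ω : Type*} [MeasurableSpace Ω] (P : Measure Ω) [IsProbabilityMeasure P]
    (X : Ω → ℝ) (hX : MemLp X 2 P)
    (a b : ℝ) (hab : a < b)
    (h0 : P {ω | X ω ∈ Set.Ioo a b} = 0) :
    (∫ ω, (X ω) ^ 2 ∂P) - (∫ ω, X ω ∂P) ^ 2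
      ≥ ((∫ ω, X ω ∂P) - a) * (b - ∫ ω, X ω ∂P) := by
  have hnonneg := integral_sub_mul_sub_nonneg_of_measure_Ioo_eq_zero hab.le h0
  rw [integral_sub_mul_sub hX a b] at hnonneg
  linarith

theorem stmt_0 {Ω : Type*} [MeasurableSpace Ω] (P : Measure Ω) [IsProbabilityMeasure P]
    (X : Ω → ℝ) (hX : MemLp X 2 P)
    (a b : ℝ) (hab : a < b)
    (h0 : P {ω | X ω ∈ Set.Ioo a b} = 0)
    (hμa : a < ∫ ω, X ω ∂P) (hμb : (∫ ω, X ω ∂P) < b) :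
    (∫ ω, (X ω) ^ 2 ∂P) - (∫ ω, X ω ∂P) ^ 2
      ≥ ((∫ ω, X ω ∂P) - a) * (b - ∫ ω, X ω ∂P) :=
  stmt_0_general P X hX a b hab h0
end

section
/- Let H be a finite-dimensional complex inner product space, A a self-adjoint operator on H whose spectrum is contained in ℤ, and ψ a unit vector with expectation value μ = ⟨ψ, Aψ⟩ satisfying 0 < μ < 1. Then the variance ⟨ψ, A²ψ⟩ - μ² is at least μ(1 - μ). -/
/-!
Every integer satisfies `m ≤ m ^ 2`, so expanding `ψ` in an orthonormal eigenbasis of `A` gives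
`⟪ψ, A ψ⟫ = ∑ λᵢ |cᵢ|² ≤ ∑ λᵢ² |cᵢ|² = ‖A ψ‖² = ⟪ψ, A² ψ⟫`, i.e. `μ ≤ v`, which is the claim
`v - μ² ≥ μ (1 - μ)` rearranged.
-/

open scoped InnerProductSpace
open RCLike

namespace LinearMap.IsSymmetric

variable {𝕜 E : Type*} [RCLike 𝕜] [NormedAddCommGroup E] [InnerProductSpace 𝕜 E]
  [FiniteDimensional 𝕜 E] {T : E →ₗ[𝕜] E} (hT : T.IsSymmetric) {n : ℕ}
  (hn : Module.finrank 𝕜 E = n)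

include hT hn

theorem re_inner_map_self_eq_sum_eigenvalues (x : E) :
    re ⟪x, T x⟫_𝕜 = ∑ i, hT.eigenvalues hn i * ‖(hT.eigenvectorBasis hn).repr x i‖ ^ 2 := by
  rw [← (hT.eigenvectorBasis hn).repr.inner_map_map, PiLp.inner_apply, map_sum]
  congr 1 with i
  rw [hT.eigenvectorBasis_apply_self_apply, inner_apply, mul_assoc, mul_conj, ← ofReal_pow,
    ← ofReal_mul, ofReal_re]

theorem norm_map_sq_eq_sum_eigenvalues (x : E) :
    ‖T x‖ ^ 2 = ∑ i, hT.eigenvalues hn i ^ 2 * ‖(hT.eigenvectorBasis hn).repr x i‖ ^ 2 := by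
  rw [← (hT.eigenvectorBasis hn).repr.norm_map, EuclideanSpace.norm_sq_eq]
  congr 1 with i
  rw [hT.eigenvectorBasis_apply_self_apply, norm_mul, mul_pow, norm_ofReal, sq_abs]

omit hn in
theorem re_inner_map_self_le_norm_map_sq
    (hint : ∀ c : 𝕜, Module.End.HasEigenvalue T c → ∃ m : ℤ, c = m) (x : E) :
    re ⟪x, T x⟫_𝕜 ≤ ‖T x‖ ^ 2 := by
  rw [hT.re_inner_map_self_eq_sum_eigenvalues rfl, hT.norm_map_sq_eq_sum_eigenvalues rfl]
  gcongr with i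
  obtain ⟨m, hm⟩ := hint _ (hT.hasEigenvalue_eigenvalues rfl i)
  rw [show hT.eigenvalues rfl i = m by exact_mod_cast hm]
  exact_mod_cast Int.le_self_sq m

end LinearMap.IsSymmetric

theorem stmt_2_general {H : Type*} [NormedAddCommGroup H] [InnerProductSpace ℂ H]
    [FiniteDimensional ℂ H]
    (A : H →ₗ[ℂ] H) (hA : ∀ x y : H, ⟪A x, y⟫_ℂ = ⟪x, A y⟫_ℂ)
    (hspec : ∀ c ∈ spectrum ℂ A, ∃ n : ℤ, c = (n : ℂ))
    (ψ : H)
    (μ : ℝ) (hμ : (μ : ℂ) = ⟪ψ, A ψ⟫_ℂ)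
    (v : ℝ) (hv : (v : ℂ) = ⟪ψ, A (A ψ)⟫_ℂ) :
    v - μ ^ 2 ≥ μ * (1 - μ) := by
  have hμ_re : μ = re ⟪ψ, A ψ⟫_ℂ := by rw [← hμ, re_to_complex, Complex.ofReal_re]
  have hv_norm : v = ‖A ψ‖ ^ 2 := by
    rw [← Complex.ofReal_inj, hv, ← hA, inner_self_eq_norm_sq_to_K]
    norm_cast
  have hμ_le_v : μ ≤ v := by
    rw [hμ_re, hv_norm]
    exact LinearMap.IsSymmetric.re_inner_map_self_le_norm_map_sq hA
      (fun c hc ↦ hspec c hc.mem_spectrum) ψ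
  linarith

theorem stmt_2 {H : Type*} [NormedAddCommGroup H] [InnerProductSpace ℂ H]
    [FiniteDimensional ℂ H]
    (A : H →ₗ[ℂ] H) (hA : ∀ x y : H, ⟪A x, y⟫_ℂ = ⟪x, A y⟫_ℂ)
    (hspec : ∀ c ∈ spectrum ℂ A, ∃ n : ℤ, c = (n : ℂ))
    (ψ : H) (hψ : ‖ψ‖ = 1)
    (μ : ℝ) (hμ : (μ : ℂ) = ⟪ψ, A ψ⟫_ℂ) (hμ0 : 0 < μ) (hμ1 : μ < 1)
    (v : ℝ) (hv : (v : ℂ) = ⟪ψ, A (A ψ)⟫_ℂ) :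
    v - μ ^ 2 ≥ μ * (1 - μ) :=
  stmt_2_general A hA hspec ψ μ hμ v hv
end

section
/- Let D : [0,∞) → ℝ be a differentiable nonnegative nonincreasing function and let Ψ : [0,∞) → H be a continuously differentiable curve in a Hilbert space H such that ‖Ψ'(t)‖² = -½ D'(t) and -D'(t) ≥ D(t) for all t. Then for all 0 ≤ t₁ ≤ t₂, ‖Ψ(t₂) - Ψ(t₁)‖ ≤ √(2 D(t₁)) - √(2 D(t₂)). -/
/-!
Where `D > 0`, the function `√(2 D)` has derivative `D' / √(2 D)`, and `-D' ≥ D` is exactly what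
makes the speed `‖Ψ'‖ = √(-D' / 2)` at most `-D' / √(2 D)`. Hence `√(2 D t₁) - √(2 D t)` fences
`‖Ψ t - Ψ t₁‖` from `t = t₁` on. Zeros of `D` are handled by replacing `2 D` with `2 D + ε`, which
costs a drift `√ε / 4` in the speed bound, and letting `ε → 0`.
-/

open Set Filter Topology

theorem le_div_sqrt_add_sqrt_div_four {x a d ε : ℝ} (hx : x ^ 2 ≤ a / 2) (hd : 0 ≤ d)
    (hda : d ≤ a) (hε : 0 < ε) : x ≤ a / √(2 * d + ε) + √ε / 4 := by
  set s := √(2 * d + ε)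
  have hs_sq : s ^ 2 = 2 * d + ε := Real.sq_sqrt (by positivity)
  have hs_pos : 0 < s := Real.sqrt_pos.2 (by positivity)
  have hs_ge : √ε ≤ s := Real.sqrt_le_sqrt (by linarith)
  -- `(x s)² ≤ (a / 2) (2a + ε) ≤ (a + ε / 4)²`
  have hxs : x * s ≤ a + ε / 4 := by
    have : (x * s) ^ 2 ≤ (a + ε / 4) ^ 2 := by
      rw [mul_pow, hs_sq]
      nlinarith [sq_nonneg x]
    exact (le_abs_self _).trans (abs_le_of_sq_le_sq this (by linarith))
  have hεs : ε / 4 / s ≤ √ε / 4 := by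
    calc ε / 4 / s ≤ ε / 4 / √ε := by gcongr
      _ = √ε / 4 := by rw [div_right_comm, Real.div_sqrt]
  calc x ≤ (a + ε / 4) / s := (le_div_iff₀ hs_pos).2 hxs
    _ ≤ a / s + √ε / 4 := by rw [add_div]; linarith

section

variable {E : Type*} [NormedAddCommGroup E] [NormedSpace ℝ E] {f f' : ℝ → E} {D D' : ℝ → ℝ}
  {a b : ℝ}

theorem norm_sub_le_sqrt_add_sub_sqrt_add (hab : a ≤ b)
    (hf : ∀ t ∈ Icc a b, HasDerivAt f (f' t) t) (hD : ∀ t ∈ Icc a b, HasDerivAt D (D' t) t)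
    (hD_nonneg : ∀ t ∈ Icc a b, 0 ≤ D t) (hD_le : ∀ t ∈ Icc a b, D t ≤ -D' t)
    (hspeed : ∀ t ∈ Icc a b, ‖f' t‖ ^ 2 ≤ -D' t / 2) {ε : ℝ} (hε : 0 < ε) :
    ‖f b - f a‖ ≤ √(2 * D a + ε) - √(2 * D b + ε) + (b - a) * (√ε / 4) := by
  have hpos : ∀ t ∈ Icc a b, 2 * D t + ε ≠ 0 := fun t ht => by
    linarith [hD_nonneg t ht]
  have hB : ∀ t ∈ Icc a b,
      HasDerivAt (fun t => √(2 * D a + ε) - √(2 * D t + ε) + (t - a) * (√ε / 4))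
        (-D' t / √(2 * D t + ε) + √ε / 4) t := by
    intro t ht
    have hsqrt := (((hD t ht).const_mul 2).add_const ε).sqrt (hpos t ht)
    have h := (hsqrt.const_sub (√(2 * D a + ε))).add
      (((hasDerivAt_id' t).sub_const a).mul_const (√ε / 4))
    rwa [mul_div_mul_left _ _ two_ne_zero, one_mul, ← neg_div] at h
  refine image_norm_le_of_norm_deriv_right_le_deriv_boundary' (f := fun t => f t - f a)
    (fun t ht => ((hf t ht).continuousAt.sub continuousAt_const).continuousWithinAt)
    (fun t ht => ((hf t (Ico_subset_Icc_self ht)).sub_const (f a)).hasDerivWithinAt)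
    (by simp) (fun t ht => (hB t ht).continuousAt.continuousWithinAt)
    (fun t ht => (hB t (Ico_subset_Icc_self ht)).hasDerivWithinAt) (fun t ht => ?_)
    (right_mem_Icc.2 hab)
  have ht := Ico_subset_Icc_self ht
  exact le_div_sqrt_add_sqrt_div_four (hspeed t ht) (hD_nonneg t ht) (hD_le t ht) hε

theorem norm_sub_le_sqrt_sub_sqrt (hab : a ≤ b)
    (hf : ∀ t ∈ Icc a b, HasDerivAt f (f' t) t) (hD : ∀ t ∈ Icc a b, HasDerivAt D (D' t) t)
    (hD_nonneg : ∀ t ∈ Icc a b, 0 ≤ D t) (hD_le : ∀ t ∈ Icc a b, D t ≤ -D' t)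
    (hspeed : ∀ t ∈ Icc a b, ‖f' t‖ ^ 2 ≤ -D' t / 2) :
    ‖f b - f a‖ ≤ √(2 * D a) - √(2 * D b) := by
  have hlim : Tendsto (fun ε => √(2 * D a + ε) - √(2 * D b + ε) + (b - a) * (√ε / 4))
      (𝓝[>] 0) (𝓝 (√(2 * D a) - √(2 * D b))) := by
    have h : Continuous (fun ε => √(2 * D a + ε) - √(2 * D b + ε) + (b - a) * (√ε / 4)) := by
      fun_prop
    simpa using (h.tendsto 0).mono_left nhdsWithin_le_nhds
  exact ge_of_tendsto hlim (eventually_nhdsWithin_of_forall fun ε hε =>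
    norm_sub_le_sqrt_add_sub_sqrt_add hab hf hD hD_nonneg hD_le hspeed hε)

end

theorem stmt_5_general {H : Type*} [NormedAddCommGroup H] [InnerProductSpace ℂ H]
    (D : ℝ → ℝ) (hD : Differentiable ℝ D)
    (hDnonneg : ∀ t, 0 ≤ t → 0 ≤ D t)
    (Ψ : ℝ → H) (Ψ' : ℝ → H)
    (hΨ : ∀ t, HasDerivAt Ψ (Ψ' t) t)
    (hnorm : ∀ t, 0 ≤ t → ‖Ψ' t‖ ^ 2 = -(1 / 2) * deriv D t)
    (hgrow : ∀ t, 0 ≤ t → D t ≤ -deriv D t) :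
    ∀ t₁ t₂, 0 ≤ t₁ → t₁ ≤ t₂ →
      ‖Ψ t₂ - Ψ t₁‖ ≤ Real.sqrt (2 * D t₁) - Real.sqrt (2 * D t₂) := by
  intro t₁ t₂ ht₁ h12
  have hnonneg : ∀ t ∈ Icc t₁ t₂, 0 ≤ t := fun t ht => ht₁.trans ht.1
  exact norm_sub_le_sqrt_sub_sqrt h12 (fun t _ => hΨ t) (fun t _ => (hD t).hasDerivAt)
    (fun t ht => hDnonneg t (hnonneg t ht)) (fun t ht => hgrow t (hnonneg t ht))
    (fun t ht => by rw [hnorm t (hnonneg t ht)]; linarith)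

theorem stmt_5 {H : Type*} [NormedAddCommGroup H] [InnerProductSpace ℂ H]
    (D : ℝ → ℝ) (hD : Differentiable ℝ D)
    (hDnonneg : ∀ t, 0 ≤ t → 0 ≤ D t)
    (hDmono : ∀ t, 0 ≤ t → deriv D t ≤ 0)
    (Ψ : ℝ → H) (Ψ' : ℝ → H)
    (hΨ : ∀ t, HasDerivAt Ψ (Ψ' t) t) (hΨ'cont : Continuous Ψ')
    (hnorm : ∀ t, 0 ≤ t → ‖Ψ' t‖ ^ 2 = -(1 / 2) * deriv D t)
    (hgrow : ∀ t, 0 ≤ t → D t ≤ -deriv D t) :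
    ∀ t₁ t₂, 0 ≤ t₁ → t₁ ≤ t₂ →
      ‖Ψ t₂ - Ψ t₁‖ ≤ Real.sqrt (2 * D t₁) - Real.sqrt (2 * D t₂) :=
  stmt_5_general D hD hDnonneg Ψ Ψ' hΨ hnorm hgrow
end

section
/- Let H be a finite-dimensional complex inner product space, Ĥ a self-adjoint operator with minimal eigenvalue E₀, π₀ the orthogonal projection onto the E₀-eigenspace, E⁻ the smallest eigenvalue of Ĥ strictly greater than E₀ (assumed to exist), and E⁺ the largest eigenvalue. Then for every unit vector ψ with Ẽ = ⟨ψ, Ĥψ⟩, one has (Ẽ - E₀)/(E⁺ - E₀) ≤ 1 - ‖π₀ψ‖² ≤ (Ẽ - E₀)/(E⁻ - E₀). -/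
/-!
Split `ψ = p + q` with `p` the projection onto the ground eigenspace and `q ⊥ p`. Since `A p = E₀ p`,
the cross terms vanish and `Ẽ - E₀ = ⟪q, (A - E₀) q⟫`, while `1 - ‖p‖² = ‖q‖²`. Expanding `q` in an
orthonormal eigenbasis of `A`, only eigenvalues `≠ E₀`, hence in `[E⁻, E⁺]`, carry weight, so
`(E⁻ - E₀) ‖q‖² ≤ Ẽ - E₀ ≤ (E⁺ - E₀) ‖q‖²`.
-/

open scoped InnerProductSpace
open RCLike

namespace LinearMap.IsSymmetric

variable {𝕜 E : Type*} [RCLike 𝕜] [NormedAddCommGroup E] [InnerProductSpace 𝕜 E]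
  {T : E →ₗ[𝕜] E}

theorem re_inner_add_apply_add_of_apply_eq_smul (hT : T.IsSymmetric) {p q : E} {c : ℝ}
    (hp : T p = (c : 𝕜) • p) (hpq : ⟪p, q⟫_𝕜 = 0) :
    re ⟪p + q, T (p + q)⟫_𝕜 = c * ‖p‖ ^ 2 + re ⟪q, T q⟫_𝕜 := by
  have hTpq : ⟪p, T q⟫_𝕜 = 0 := by rw [← hT, hp, inner_smul_real_left, hpq, smul_zero]
  have hqp : ⟪q, p⟫_𝕜 = 0 := inner_eq_zero_symm.mp hpq
  rw [map_add, hp, inner_add_left, inner_add_right, inner_add_right, inner_smul_real_right,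
    inner_smul_real_right, hTpq, hqp, inner_self_eq_norm_sq_to_K, smul_zero, add_zero,
    zero_add, map_add, smul_re, ← ofReal_pow, ofReal_re]

theorem re_inner_apply_self_sub_mul_norm_sq_eq (hT : T.IsSymmetric) (c : ℝ)
    [(Module.End.eigenspace T (c : 𝕜)).HasOrthogonalProjection] (x : E) :
    re ⟪x, T x⟫_𝕜 - c * ‖x‖ ^ 2 =
      re ⟪(Module.End.eigenspace T (c : 𝕜))ᗮ.starProjection x,
          T ((Module.End.eigenspace T (c : 𝕜))ᗮ.starProjection x)⟫_𝕜 -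
        c * ‖(Module.End.eigenspace T (c : 𝕜))ᗮ.starProjection x‖ ^ 2 := by
  set V := Module.End.eigenspace T (c : 𝕜)
  have hp : V.starProjection x ∈ V := V.starProjection_apply_mem x
  have hpq : ⟪V.starProjection x, Vᗮ.starProjection x⟫_𝕜 = 0 :=
    Submodule.inner_right_of_mem_orthogonal hp (Vᗮ.starProjection_apply_mem x)
  have hx := hT.re_inner_add_apply_add_of_apply_eq_smul (Module.End.mem_eigenspace_iff.mp hp) hpq
  rw [V.starProjection_add_starProjection_orthogonal] at hx
  rw [hx, V.norm_sq_eq_add_norm_sq_starProjection x]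
  ring

variable [FiniteDimensional 𝕜 E] {n : ℕ}

theorem re_inner_apply_self_eq_sum (hT : T.IsSymmetric) (hn : Module.finrank 𝕜 E = n) (x : E) :
    re ⟪x, T x⟫_𝕜 = ∑ i, hT.eigenvalues hn i * ‖⟪hT.eigenvectorBasis hn i, x⟫_𝕜‖ ^ 2 := by
  rw [← (hT.eigenvectorBasis hn).sum_inner_mul_inner, map_sum]
  refine Finset.sum_congr rfl fun i _ => ?_
  rw [← hT, apply_eigenvectorBasis, inner_smul_real_left, ← inner_conj_symm x, mul_smul_comm,
    smul_re, RCLike.conj_mul]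
  norm_cast

theorem mul_norm_sq_le_re_inner_apply_self (hT : T.IsSymmetric) (hn : Module.finrank 𝕜 E = n)
    {a : ℝ} {x : E} (h : ∀ i, ⟪hT.eigenvectorBasis hn i, x⟫_𝕜 ≠ 0 → a ≤ hT.eigenvalues hn i) :
    a * ‖x‖ ^ 2 ≤ re ⟪x, T x⟫_𝕜 := by
  rw [hT.re_inner_apply_self_eq_sum hn, ← (hT.eigenvectorBasis hn).sum_sq_norm_inner_right,
    Finset.mul_sum]
  refine Finset.sum_le_sum fun i _ => ?_
  by_cases hi : ⟪hT.eigenvectorBasis hn i, x⟫_𝕜 = 0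
  · simp [hi]
  · exact mul_le_mul_of_nonneg_right (h i hi) (by positivity)

theorem mul_norm_sq_le_re_inner_apply_self_of_mem_orthogonal_eigenspace (hT : T.IsSymmetric)
    (hn : Module.finrank 𝕜 E = n) {c a : ℝ}
    (h : ∀ i, hT.eigenvalues hn i ≠ c → a ≤ hT.eigenvalues hn i) {x : E}
    (hx : x ∈ (Module.End.eigenspace T (c : 𝕜))ᗮ) :
    a * ‖x‖ ^ 2 ≤ re ⟪x, T x⟫_𝕜 := by
  refine hT.mul_norm_sq_le_re_inner_apply_self hn fun i hi => h i fun hc => hi ?_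
  refine Submodule.inner_right_of_mem_orthogonal (Module.End.mem_eigenspace_iff.mpr ?_) hx
  rw [← hc, apply_eigenvectorBasis]

theorem re_inner_apply_self_le_mul_norm_sq (hT : T.IsSymmetric) (hn : Module.finrank 𝕜 E = n)
    {c : ℝ} (h : ∀ i, hT.eigenvalues hn i ≤ c) (x : E) :
    re ⟪x, T x⟫_𝕜 ≤ c * ‖x‖ ^ 2 := by
  rw [hT.re_inner_apply_self_eq_sum hn, ← (hT.eigenvectorBasis hn).sum_sq_norm_inner_right,
    Finset.mul_sum]
  exact Finset.sum_le_sum fun i _ => mul_le_mul_of_nonneg_right (h i) (by positivity)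

end LinearMap.IsSymmetric

theorem stmt_7_general {H : Type*} [NormedAddCommGroup H] [InnerProductSpace ℂ H]
    [FiniteDimensional ℂ H]
    (A : H →ₗ[ℂ] H) (hA : ∀ x y : H, ⟪A x, y⟫_ℂ = ⟪x, A y⟫_ℂ)
    (E₀ Em Ep : ℝ)
    (hE₀min : ∀ c ∈ spectrum ℂ A, ∃ r : ℝ, c = (r : ℂ) ∧ E₀ ≤ r)
    (hEmmem : (Em : ℂ) ∈ spectrum ℂ A) (hE₀Em : E₀ < Em)
    (hEmmin : ∀ r : ℝ, (r : ℂ) ∈ spectrum ℂ A → E₀ < r → Em ≤ r)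
    (hEpmax : ∀ r : ℝ, (r : ℂ) ∈ spectrum ℂ A → r ≤ Ep)
    (ψ : H) (hψ : ‖ψ‖ = 1)
    (Et : ℝ) (hEt : (Et : ℂ) = ⟪ψ, A ψ⟫_ℂ) :
    (Et - E₀) / (Ep - E₀)
        ≤ 1 - ‖(Submodule.orthogonalProjectionOnto (Module.End.eigenspace A (E₀ : ℂ)) ψ : H)‖ ^ 2 ∧
    1 - ‖(Submodule.orthogonalProjectionOnto (Module.End.eigenspace A (E₀ : ℂ)) ψ : H)‖ ^ 2
        ≤ (Et - E₀) / (Em - E₀) := by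
  rw [Submodule.coe_orthogonalProjectionOnto_apply]
  set V := Module.End.eigenspace A (E₀ : ℂ)
  have hA' : A.IsSymmetric := hA
  set μ := hA'.eigenvalues rfl
  have hμ_mem (i) : (μ i : ℂ) ∈ spectrum ℂ A := (hA'.hasEigenvalue_eigenvalues rfl i).mem_spectrum
  have hE₀_le (i) : E₀ ≤ μ i := by
    obtain ⟨r, hr, hE₀r⟩ := hE₀min _ (hμ_mem i)
    exact (Complex.ofReal_injective hr).symm ▸ hE₀r
  set q := Vᗮ.starProjection ψ
  have hq : q ∈ Vᗮ := Vᗮ.starProjection_apply_mem ψ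
  have hgap : Et - E₀ = re ⟪q, A q⟫_ℂ - E₀ * ‖q‖ ^ 2 :=
    calc Et - E₀ = re ⟪ψ, A ψ⟫_ℂ - E₀ * ‖ψ‖ ^ 2 := by simp [← hEt, hψ]
      _ = _ := hA'.re_inner_apply_self_sub_mul_norm_sq_eq E₀ ψ
  have hlow : Em * ‖q‖ ^ 2 ≤ re ⟪q, A q⟫_ℂ :=
    hA'.mul_norm_sq_le_re_inner_apply_self_of_mem_orthogonal_eigenspace rfl
      (fun i hi => hEmmin _ (hμ_mem i) ((hE₀_le i).lt_of_ne' hi)) hq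
  have hhigh : re ⟪q, A q⟫_ℂ ≤ Ep * ‖q‖ ^ 2 :=
    hA'.re_inner_apply_self_le_mul_norm_sq rfl (fun i => hEpmax _ (hμ_mem i)) q
  have hpyth : ‖V.starProjection ψ‖ ^ 2 + ‖q‖ ^ 2 = 1 := by
    rw [← V.norm_sq_eq_add_norm_sq_starProjection, hψ, one_pow]
  have hEm_le_Ep : Em ≤ Ep := hEpmax Em hEmmem
  rw [show 1 - ‖V.starProjection ψ‖ ^ 2 = ‖q‖ ^ 2 by linarith, hgap, div_le_iff₀ (by linarith),
    le_div_iff₀ (by linarith)]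
  constructor <;> linarith

theorem stmt_7 {H : Type*} [NormedAddCommGroup H] [InnerProductSpace ℂ H]
    [FiniteDimensional ℂ H]
    (A : H →ₗ[ℂ] H) (hA : ∀ x y : H, ⟪A x, y⟫_ℂ = ⟪x, A y⟫_ℂ)
    (E₀ Em Ep : ℝ)
    (hE₀mem : (E₀ : ℂ) ∈ spectrum ℂ A)
    (hE₀min : ∀ c ∈ spectrum ℂ A, ∃ r : ℝ, c = (r : ℂ) ∧ E₀ ≤ r)
    (hEmmem : (Em : ℂ) ∈ spectrum ℂ A) (hE₀Em : E₀ < Em)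
    (hEmmin : ∀ r : ℝ, (r : ℂ) ∈ spectrum ℂ A → E₀ < r → Em ≤ r)
    (hEpmem : (Ep : ℂ) ∈ spectrum ℂ A)
    (hEpmax : ∀ r : ℝ, (r : ℂ) ∈ spectrum ℂ A → r ≤ Ep)
    (ψ : H) (hψ : ‖ψ‖ = 1)
    (Et : ℝ) (hEt : (Et : ℂ) = ⟪ψ, A ψ⟫_ℂ) :
    (Et - E₀) / (Ep - E₀)
        ≤ 1 - ‖(Submodule.orthogonalProjectionOnto (Module.End.eigenspace A (E₀ : ℂ)) ψ : H)‖ ^ 2 ∧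
    1 - ‖(Submodule.orthogonalProjectionOnto (Module.End.eigenspace A (E₀ : ℂ)) ψ : H)‖ ^ 2
        ≤ (Et - E₀) / (Em - E₀) :=
  stmt_7_general A hA E₀ Em Ep hE₀min hEmmem hE₀Em hEmmin hEpmax ψ hψ Et hEt
end

section
/- Let H be a finite-dimensional complex inner product space, Ĥ self-adjoint with nondegenerate minimal eigenvalue E₀ and unit ground state ψ₀, and let E⁺ be the largest eigenvalue of Ĥ. Let P be an orthogonal projection on H with Pψ₀ ≠ 0, and define E_P = min over unit vectors φ in the range of P of ⟨φ, Ĥφ⟩. Then E_P - E₀ ≤ (E⁺ - E₀)(1 - ‖Pψ₀‖²). -/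
/-!
Since `P` is an orthogonal projection, `⟪ψ₀, Pψ₀⟫ = ‖Pψ₀‖² =: a`, so `Pψ₀ = a ψ₀ + w` with
`w ⟂ ψ₀` and `‖w‖² = a - a²`. As `ψ₀` is an eigenvector of `Ĥ`, this splitting is also orthogonal
for the quadratic form of `Ĥ`: `⟪Pψ₀, Ĥ Pψ₀⟫ = a² E₀ + ⟪w, Ĥ w⟫ ≤ a² E₀ + (a - a²) E⁺`.
Dividing by `a` bounds the Rayleigh quotient of the trial vector `Pψ₀ ∈ range P`, hence `E_P`,
by `a E₀ + (1 - a) E⁺`.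
-/

open scoped InnerProductSpace

open RCLike

namespace LinearMap

variable {𝕜 E : Type*} [RCLike 𝕜] [NormedAddCommGroup E] [InnerProductSpace 𝕜 E]

theorem exists_norm_inner_self_apply_le [FiniteDimensional 𝕜 E] (T : E →ₗ[𝕜] E) :
    ∃ C, ∀ x, ‖⟪x, T x⟫_𝕜‖ ≤ C * ‖x‖ ^ 2 := by
  refine ⟨‖toContinuousLinearMap T‖, fun x => ?_⟩
  calc ‖⟪x, T x⟫_𝕜‖ ≤ ‖x‖ * ‖toContinuousLinearMap T x‖ := norm_inner_le_norm _ _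
    _ ≤ ‖x‖ * (‖toContinuousLinearMap T‖ * ‖x‖) := by
        gcongr; exact ContinuousLinearMap.le_opNorm _ _
    _ = ‖toContinuousLinearMap T‖ * ‖x‖ ^ 2 := by ring

namespace IsSymmetric

theorem re_inner_self_apply_le [FiniteDimensional 𝕜 E] {T : E →ₗ[𝕜] E} (hT : T.IsSymmetric)
    {c : ℝ} (hc : ∀ μ : ℝ, Module.End.HasEigenvalue T μ → μ ≤ c) (x : E) :
    re ⟪x, T x⟫_𝕜 ≤ c * ‖x‖ ^ 2 := by
  set b := hT.eigenvectorBasis rfl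
  set μ := hT.eigenvalues rfl
  have hterm (i) : re (⟪x, b i⟫_𝕜 * ⟪b i, T x⟫_𝕜) = μ i * ‖⟪b i, x⟫_𝕜‖ ^ 2 := by
    rw [← hT, hT.apply_eigenvectorBasis, inner_smul_left, conj_ofReal, mul_left_comm,
      ← inner_conj_symm x, RCLike.conj_mul, ← ofReal_pow, re_ofReal_mul, ofReal_re]
  calc re ⟪x, T x⟫_𝕜 = ∑ i, μ i * ‖⟪b i, x⟫_𝕜‖ ^ 2 := by
        rw [← b.sum_inner_mul_inner, map_sum]
        exact Finset.sum_congr rfl fun i _ => hterm i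
    _ ≤ ∑ i, c * ‖⟪b i, x⟫_𝕜‖ ^ 2 := by
        gcongr with i
        exact hc _ (hT.hasEigenvalue_eigenvalues rfl i)
    _ = c * ‖x‖ ^ 2 := by rw [← Finset.mul_sum, b.sum_sq_norm_inner_right]

theorem inner_add_apply_add_of_eigenvector {T : E →ₗ[𝕜] E} (hT : T.IsSymmetric)
    {ψ w : E} {μ : 𝕜} (hψ : T ψ = μ • ψ) (hw : ⟪ψ, w⟫_𝕜 = 0) :
    ⟪ψ + w, T (ψ + w)⟫_𝕜 = ⟪ψ, T ψ⟫_𝕜 + ⟪w, T w⟫_𝕜 := by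
  have hψw : ⟪ψ, T w⟫_𝕜 = 0 := by rw [← hT, hψ, inner_smul_left, hw, mul_zero]
  have hwψ : ⟪w, T ψ⟫_𝕜 = 0 := by rw [hψ, inner_smul_right, inner_eq_zero_symm.1 hw, mul_zero]
  rw [map_add, inner_add_left, inner_add_right, inner_add_right, hψw, hwψ, add_zero, zero_add]

theorem inner_self_apply_eq_norm_sq_of_isIdempotentElem {P : E →ₗ[𝕜] E}
    (hP : P.IsSymmetric) (hP' : IsIdempotentElem P) (x : E) :
    ⟪x, P x⟫_𝕜 = (‖P x‖ : 𝕜) ^ 2 := by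
  rw [← inner_self_eq_norm_sq_to_K, hP, ← Module.End.mul_apply, hP'.eq]

theorem re_inner_self_apply_le_of_eigenvector {T : E →ₗ[𝕜] E} (hT : T.IsSymmetric)
    {ψ χ : E} {E₀ c : ℝ} (hψ : ‖ψ‖ = 1) (hTψ : T ψ = (E₀ : 𝕜) • ψ)
    (hc : ∀ x, re ⟪x, T x⟫_𝕜 ≤ c * ‖x‖ ^ 2) (hχ : ⟪ψ, χ⟫_𝕜 = (‖χ‖ : 𝕜) ^ 2) :
    re ⟪χ, T χ⟫_𝕜 ≤ ‖χ‖ ^ 2 * (‖χ‖ ^ 2 * E₀ + (1 - ‖χ‖ ^ 2) * c) := by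
  set a := ‖χ‖ ^ 2 with ha
  set w := χ - (a : 𝕜) • ψ
  have hχ_eq : χ = (a : 𝕜) • ψ + w := by simp [w]
  have hψw : ⟪ψ, w⟫_𝕜 = 0 := by
    rw [inner_sub_right, inner_smul_right, hχ, inner_self_eq_norm_sq_to_K, hψ]
    push_cast [a]
    ring
  have hw : ⟪(a : 𝕜) • ψ, w⟫_𝕜 = 0 := by rw [inner_smul_left, hψw, mul_zero]
  have hnorm_w : ‖w‖ ^ 2 = a - a ^ 2 := by
    have hpyth := norm_add_sq_eq_norm_sq_add_norm_sq_of_inner_eq_zero _ _ hw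
    rw [← hχ_eq, norm_smul, hψ, norm_ofReal, abs_of_nonneg (by positivity)] at hpyth
    linear_combination -hpyth - ha
  have hψ_part : re ⟪(a : 𝕜) • ψ, T ((a : 𝕜) • ψ)⟫_𝕜 = a ^ 2 * E₀ := by
    rw [map_smul, hTψ, inner_smul_left, inner_smul_right, inner_smul_right,
      inner_self_eq_norm_sq_to_K, hψ]
    simp only [conj_ofReal, ofReal_one, one_pow, mul_one]
    norm_cast
    ring
  have hsplit := hT.inner_add_apply_add_of_eigenvector
    (by rw [map_smul, hTψ, smul_comm]) hw
  calc re ⟪χ, T χ⟫_𝕜 = a ^ 2 * E₀ + re ⟪w, T w⟫_𝕜 := by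
        rw [hχ_eq, hsplit, map_add, hψ_part]
    _ ≤ a ^ 2 * E₀ + c * (a - a ^ 2) := by grw [hc w, hnorm_w]
    _ = a * (a * E₀ + (1 - a) * c) := by ring

theorem sInf_le_re_inner_self_apply_div [FiniteDimensional 𝕜 E] {A P : E →ₗ[𝕜] E}
    (hA : A.IsSymmetric) {χ : E} (hχ : χ ≠ 0) (hPχ : P χ = χ) :
    sInf {e : ℝ | ∃ φ : E, ‖φ‖ = 1 ∧ P φ = φ ∧ (e : 𝕜) = ⟪φ, A φ⟫_𝕜} ≤
      re ⟪χ, A χ⟫_𝕜 / ‖χ‖ ^ 2 := by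
  obtain ⟨C, hC⟩ := A.exists_norm_inner_self_apply_le
  refine csInf_le ⟨-C, ?_⟩ ⟨(‖χ‖⁻¹ : 𝕜) • χ, norm_smul_inv_norm hχ, by rw [map_smul, hPχ], ?_⟩
  · rintro e ⟨φ, hφ, -, he⟩
    have hCφ := hC φ
    rw [← he, hφ, norm_ofReal] at hCφ
    linarith [neg_abs_le e]
  · rw [map_smul, inner_smul_left, inner_smul_right]
    conv_rhs => rw [← hA.coe_re_inner_self_apply]
    rw [map_inv₀, conj_ofReal]
    push_cast
    ring

end IsSymmetric

end LinearMap

theorem stmt_8_general {H : Type*} [NormedAddCommGroup H] [InnerProductSpace ℂ H]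
    [FiniteDimensional ℂ H]
    (A : H →ₗ[ℂ] H) (hA : ∀ x y : H, ⟪A x, y⟫_ℂ = ⟪x, A y⟫_ℂ)
    (E₀ Ep : ℝ) (ψ₀ : H) (hψ₀ : ‖ψ₀‖ = 1)
    (hground : A ψ₀ = (E₀ : ℂ) • ψ₀)
    (hEpmax : ∀ r : ℝ, (r : ℂ) ∈ spectrum ℂ A → r ≤ Ep)
    (P : H →ₗ[ℂ] H) (hPsym : ∀ x y : H, ⟪P x, y⟫_ℂ = ⟪x, P y⟫_ℂ)
    (hPidem : P ∘ₗ P = P)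
    (hPψ₀ : P ψ₀ ≠ 0)
    (EP : ℝ)
    (hEP : EP = sInf {e : ℝ | ∃ φ : H, ‖φ‖ = 1 ∧ P φ = φ ∧ (e : ℂ) = ⟪φ, A φ⟫_ℂ}) :
    EP - E₀ ≤ (Ep - E₀) * (1 - ‖P ψ₀‖ ^ 2) := by
  replace hA : A.IsSymmetric := hA
  replace hPsym : P.IsSymmetric := hPsym
  replace hPidem : IsIdempotentElem P := hPidem
  have hPPψ₀ : P (P ψ₀) = P ψ₀ := by rw [← Module.End.mul_apply, hPidem.eq]
  have hEp (x : H) : re ⟪x, A x⟫_ℂ ≤ Ep * ‖x‖ ^ 2 :=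
    hA.re_inner_self_apply_le (fun μ hμ => hEpmax μ hμ.mem_spectrum) x
  have hupper := hA.re_inner_self_apply_le_of_eigenvector hψ₀ hground hEp
    (hPsym.inner_self_apply_eq_norm_sq_of_isIdempotentElem hPidem ψ₀)
  have hEP_le : EP ≤ ‖P ψ₀‖ ^ 2 * E₀ + (1 - ‖P ψ₀‖ ^ 2) * Ep := by
    rw [hEP]
    exact (hA.sInf_le_re_inner_self_apply_div hPψ₀ hPPψ₀).trans
      ((div_le_iff₀' (by positivity)).2 hupper)
  linarith

theorem stmt_8 {H : Type*} [NormedAddCommGroup H] [InnerProductSpace ℂ H]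
    [FiniteDimensional ℂ H]
    (A : H →ₗ[ℂ] H) (hA : ∀ x y : H, ⟪A x, y⟫_ℂ = ⟪x, A y⟫_ℂ)
    (E₀ Ep : ℝ) (ψ₀ : H) (hψ₀ : ‖ψ₀‖ = 1)
    (hground : A ψ₀ = (E₀ : ℂ) • ψ₀)
    (hnondeg : Module.End.eigenspace A (E₀ : ℂ) = Submodule.span ℂ {ψ₀})
    (hE₀min : ∀ c ∈ spectrum ℂ A, ∃ r : ℝ, c = (r : ℂ) ∧ E₀ ≤ r)
    (hEpmem : (Ep : ℂ) ∈ spectrum ℂ A)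
    (hEpmax : ∀ r : ℝ, (r : ℂ) ∈ spectrum ℂ A → r ≤ Ep)
    (P : H →ₗ[ℂ] H) (hPsym : ∀ x y : H, ⟪P x, y⟫_ℂ = ⟪x, P y⟫_ℂ)
    (hPidem : P ∘ₗ P = P)
    (hPψ₀ : P ψ₀ ≠ 0)
    (EP : ℝ)
    (hEP : EP = sInf {e : ℝ | ∃ φ : H, ‖φ‖ = 1 ∧ P φ = φ ∧ (e : ℂ) = ⟪φ, A φ⟫_ℂ}) :
    EP - E₀ ≤ (Ep - E₀) * (1 - ‖P ψ₀‖ ^ 2) :=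
  stmt_8_general A hA E₀ Ep ψ₀ hψ₀ hground hEpmax P hPsym hPidem hPψ₀ EP hEP
end

section
/- For a three-qubit pure state with single-qubit reduced density matrices ρ₁, ρ₂, ρ₃ having smaller eigenvalues λ₁⁽²⁾, λ₂⁽²⁾, λ₃⁽²⁾ respectively, the inequality λ₁⁽²⁾ ≤ λ₂⁽²⁾ + λ₃⁽²⁾ holds. -/
/-!
Let `y`, `z` be unit eigenvectors of `ρ₂`, `ρ₃` for `λ₂`, `λ₃`, and `y⊥`, `z⊥` unit vectors
orthogonal to them. Expanding `‖ψ‖² = 1` in the product bases `{y, y⊥} ⊗ {z, z⊥}` shows that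
`χ = (1 ⊗ ⟨y⊥| ⊗ ⟨z⊥|) ψ` has `N = ‖χ‖² ≥ 1 - λ₂ - λ₃`. By Cauchy–Schwarz, `N² ≤ ⟨χ, ρ₁ χ⟩`,
and `⟨χ, ρ₁ χ⟩ ≤ (1 - λ₁) N` because the eigenvalues of `ρ₁` are `λ₁ ≤ 1/2` and `1 - λ₁`.
Hence `1 - λ₂ - λ₃ ≤ N ≤ 1 - λ₁`.
-/

open Finset Matrix ComplexConjugate
open scoped ComplexOrder

lemma norm_sum_mul_sq_le {α : Type*} (s : Finset α) (f g : α → ℂ) :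
    ‖∑ x ∈ s, f x * g x‖ ^ 2 ≤ (∑ x ∈ s, ‖f x‖ ^ 2) * ∑ x ∈ s, ‖g x‖ ^ 2 := by
  calc ‖∑ x ∈ s, f x * g x‖ ^ 2 ≤ (∑ x ∈ s, ‖f x‖ * ‖g x‖) ^ 2 := by
        gcongr
        exact (norm_sum_le _ _).trans_eq (by simp only [norm_mul])
    _ ≤ _ := sum_mul_sq_le_sq_mul_sq _ _ _

section

variable {ι κ μ : Type*} [Fintype ι] [Fintype κ] [Fintype μ]

lemma star_dotProduct_self (u : ι → ℂ) :
    star u ⬝ᵥ u = ((∑ i, ‖u i‖ ^ 2 : ℝ) : ℂ) := by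
  simp [dotProduct, Complex.conj_mul']

lemma exists_sum_sq_norm_eq_one_mulVec_eq_smul {A : Matrix ι ι ℂ}
    {l : ℂ} (h : ∃ v ≠ 0, A *ᵥ v = l • v) : ∃ v, ∑ i, ‖v i‖ ^ 2 = 1 ∧ A *ᵥ v = l • v := by
  obtain ⟨v, hv, hAv⟩ := h
  have hpos : 0 < ∑ i, ‖v i‖ ^ 2 := by
    have := dotProduct_star_self_pos_iff.mpr hv
    rwa [star_dotProduct_self, Complex.zero_lt_real] at this
  refine ⟨((√(∑ i, ‖v i‖ ^ 2))⁻¹ : ℂ) • v, ?_, by rw [mulVec_smul, hAv, smul_comm]⟩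
  simp only [Pi.smul_apply, smul_eq_mul, norm_mul, mul_pow, ← mul_sum]
  rw [norm_inv, Complex.norm_real, Real.norm_of_nonneg (Real.sqrt_nonneg _), inv_pow,
    Real.sq_sqrt hpos.le, inv_mul_cancel₀ hpos.ne']

lemma Matrix.IsHermitian.posSemidef_of_det_nonneg_of_trace_nonneg
    {A : Matrix (Fin 2) (Fin 2) ℂ} (hA : A.IsHermitian) (hdet : 0 ≤ A.det) (htr : 0 ≤ A.trace) :
    A.PosSemidef := by
  rw [hA.det_eq_prod_eigenvalues, Fin.prod_univ_two] at hdet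
  rw [hA.trace_eq_sum_eigenvalues, Fin.sum_univ_two] at htr
  norm_cast at hdet htr
  rw [RCLike.ofReal_nonneg] at hdet htr
  rw [hA.posSemidef_iff_eigenvalues_nonneg]
  intro i
  fin_cases i <;> simp only [Fin.zero_eta, Fin.mk_one, Pi.zero_apply] <;> nlinarith

lemma Matrix.IsHermitian.posSemidef_smul_one_sub_of_trace_eq_one
    {ρ : Matrix (Fin 2) (Fin 2) ℂ} (hρ : ρ.IsHermitian) (htr : ρ.trace = 1) {l : ℝ}
    (hl : l ≤ 1 / 2) (hev : ∃ v ≠ 0, ρ *ᵥ v = (l : ℂ) • v) :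
    (((1 - l : ℝ) : ℂ) • 1 - ρ).PosSemidef := by
  have hsing : (ρ - (l : ℂ) • 1).det = 0 := by
    obtain ⟨v, hv, hρv⟩ := hev
    exact exists_mulVec_eq_zero_iff.mp
      ⟨v, hv, by rw [sub_mulVec, hρv, smul_mulVec, one_mulVec, sub_self]⟩
  refine IsHermitian.posSemidef_of_det_nonneg_of_trace_nonneg
    ((isHermitian_one.smul (Complex.conj_ofReal _)).sub hρ) ?_ ?_
  · -- the characteristic polynomial `X² - X + det ρ` takes the same value at `l` and `1 - l`
    have hdet : (((1 - l : ℝ) : ℂ) • 1 - ρ).det = (ρ - (l : ℂ) • 1).det := by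
      rw [trace_fin_two] at htr
      simp only [det_fin_two, sub_apply, smul_apply, one_apply_eq, one_apply_ne, ne_eq,
        zero_ne_one, one_ne_zero, not_false_eq_true, smul_eq_mul, mul_one, mul_zero,
        Complex.ofReal_sub, Complex.ofReal_one]
      linear_combination (2 * (l : ℂ) - 1) * htr
    rw [hdet, hsing]
  · have htr' : (((1 - l : ℝ) : ℂ) • 1 - ρ).trace = ((1 - 2 * l : ℝ) : ℂ) := by
      simp only [trace_sub, trace_smul, trace_one, Fintype.card_fin, smul_eq_mul, htr]
      push_cast
      ring
    rw [htr', Complex.zero_le_real]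
    linarith

/-- The reduced density matrix of the first factor of `c ∈ ℂ^ι ⊗ ℂ^κ ⊗ ℂ^μ`; those of the other
factors are `reducedDensity` of `c` with permuted arguments. -/
def reducedDensity (c : ι → κ → μ → ℂ) : Matrix ι ι ℂ :=
  of fun i i' => ∑ j, ∑ k, c i j k * conj (c i' j k)

omit [Fintype ι] in
lemma isHermitian_reducedDensity (c : ι → κ → μ → ℂ) : (reducedDensity c).IsHermitian := by
  ext i i'
  simp [reducedDensity, mul_comm]

lemma trace_reducedDensity (c : ι → κ → μ → ℂ) :
    (reducedDensity c).trace = ((∑ i, ∑ j, ∑ k, ‖c i j k‖ ^ 2 : ℝ) : ℂ) := by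
  simp [trace, reducedDensity, Complex.mul_conj']

lemma star_dotProduct_reducedDensity_mulVec (c : ι → κ → μ → ℂ) (u : ι → ℂ) :
    star u ⬝ᵥ reducedDensity c *ᵥ u = ((∑ j, ∑ k, ‖∑ i, conj (u i) * c i j k‖ ^ 2 : ℝ) : ℂ) := by
  push_cast
  simp only [← Complex.mul_conj', map_sum, map_mul, Complex.conj_conj, sum_mul,
    mul_sum, dotProduct, mulVec, reducedDensity, of_apply, Pi.star_apply, RCLike.star_def]
  simp_rw [sum_comm (γ := ι) (α := κ), sum_comm (γ := ι) (α := μ)]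
  refine sum_congr rfl fun j _ => sum_congr rfl fun k _ => ?_
  rw [sum_comm]
  exact sum_congr rfl fun _ _ => sum_congr rfl fun _ _ => by ring

lemma sum_sq_norm_contract_eq_eigenvalue (c : ι → κ → μ → ℂ) {u : ι → ℂ}
    (hu : ∑ i, ‖u i‖ ^ 2 = 1) {l : ℝ} (h : reducedDensity c *ᵥ u = (l : ℂ) • u) :
    ∑ j, ∑ k, ‖∑ i, conj (u i) * c i j k‖ ^ 2 = l := by
  have := star_dotProduct_reducedDensity_mulVec c u
  rw [h, dotProduct_smul, star_dotProduct_self, hu, smul_eq_mul, Complex.ofReal_one,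
    mul_one] at this
  exact_mod_cast this.symm

lemma sum_sq_norm_contract_le_one_sub_eigenvalue (c : Fin 2 → κ → μ → ℂ)
    (hc : ∑ i, ∑ j, ∑ k, ‖c i j k‖ ^ 2 = 1) {l : ℝ} (hl : l ≤ 1 / 2)
    (hev : ∃ v ≠ 0, reducedDensity c *ᵥ v = (l : ℂ) • v) (u : Fin 2 → ℂ) :
    ∑ j, ∑ k, ‖∑ i, conj (u i) * c i j k‖ ^ 2 ≤ (1 - l) * ∑ i, ‖u i‖ ^ 2 := by
  have hpsd := (isHermitian_reducedDensity c).posSemidef_smul_one_sub_of_trace_eq_one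
    (by rw [trace_reducedDensity, hc, Complex.ofReal_one]) hl hev
  have := hpsd.re_dotProduct_nonneg u
  rw [sub_mulVec, dotProduct_sub, smul_mulVec, one_mulVec, dotProduct_smul, star_dotProduct_self,
    star_dotProduct_reducedDensity_mulVec, smul_eq_mul, ← Complex.ofReal_mul,
    ← Complex.ofReal_sub, RCLike.re_to_complex, Complex.ofReal_re] at this
  linarith

/-- Together with `y`, a basis of `ℂ²`, orthonormal when `y` is a unit vector. -/
def perp (y : Fin 2 → ℂ) : Fin 2 → ℂ := ![-conj (y 1), conj (y 0)]

lemma sum_sq_norm_perp (y : Fin 2 → ℂ) : ∑ j, ‖perp y j‖ ^ 2 = ∑ j, ‖y j‖ ^ 2 := by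
  simp [Fin.sum_univ_two, perp, add_comm]

lemma sq_norm_sum_add_sq_norm_sum_perp {y : Fin 2 → ℂ} (hy : ∑ j, ‖y j‖ ^ 2 = 1)
    (x : Fin 2 → ℂ) :
    ‖∑ j, conj (y j) * x j‖ ^ 2 + ‖∑ j, conj (perp y j) * x j‖ ^ 2 = ∑ j, ‖x j‖ ^ 2 := by
  simp only [Fin.sum_univ_two, perp, cons_val_zero, cons_val_one, cons_val_fin_one, map_neg,
    Complex.conj_conj, Complex.sq_norm, Complex.normSq_apply, Complex.add_re, Complex.add_im,
    Complex.mul_re, Complex.mul_im, Complex.conj_re, Complex.conj_im, Complex.neg_re,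
    Complex.neg_im] at hy ⊢
  linear_combination ((x 0).re ^ 2 + (x 0).im ^ 2 + (x 1).re ^ 2 + (x 1).im ^ 2) * hy

/-- The vector `(1 ⊗ ⟨a| ⊗ ⟨b|) c ∈ ℂ^ι`. -/
def partialInner (c : ι → κ → μ → ℂ) (a : κ → ℂ) (b : μ → ℂ) (i : ι) : ℂ :=
  ∑ j, conj (a j) * ∑ k, conj (b k) * c i j k

omit [Fintype ι] in
lemma partialInner_eq_sum_comm (c : ι → κ → μ → ℂ) (a : κ → ℂ) (b : μ → ℂ) (i : ι) :
    partialInner c a b i = ∑ k, conj (b k) * ∑ j, conj (a j) * c i j k := by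
  simp only [partialInner, mul_sum]
  rw [sum_comm]
  exact sum_congr rfl fun _ _ => sum_congr rfl fun _ _ => mul_left_comm _ _ _

lemma sum_mul_partialInner (c : ι → κ → μ → ℂ) (a : κ → ℂ) (b : μ → ℂ) (w : ι → ℂ) :
    ∑ i, w i * partialInner c a b i
      = ∑ j, ∑ k, conj (a j) * conj (b k) * ∑ i, w i * c i j k := by
  simp only [partialInner, mul_sum]
  rw [sum_comm]
  refine sum_congr rfl fun j _ => ?_
  rw [sum_comm]
  exact sum_congr rfl fun k _ => sum_congr rfl fun i _ => by ring

lemma sub_sub_le_sum_sq_norm_partialInner_perp (c : ι → Fin 2 → Fin 2 → ℂ) {y z : Fin 2 → ℂ}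
    (hy : ∑ j, ‖y j‖ ^ 2 = 1) (hz : ∑ k, ‖z k‖ ^ 2 = 1) :
    ∑ i, ∑ j, ∑ k, ‖c i j k‖ ^ 2 - ∑ i, ∑ k, ‖∑ j, conj (y j) * c i j k‖ ^ 2
      - ∑ i, ∑ j, ‖∑ k, conj (z k) * c i j k‖ ^ 2
      ≤ ∑ i, ‖partialInner c (perp y) (perp z) i‖ ^ 2 := by
  have hsplit_y : ∑ i, ∑ j, ∑ k, ‖c i j k‖ ^ 2 = ∑ i, ∑ k, ‖∑ j, conj (y j) * c i j k‖ ^ 2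
      + ∑ i, ∑ k, ‖∑ j, conj (perp y j) * c i j k‖ ^ 2 := by
    simp only [← sum_add_distrib, sq_norm_sum_add_sq_norm_sum_perp hy]
    exact sum_congr rfl fun _ _ => sum_comm
  have hsplit_perp_y : ∑ i, ∑ k, ‖∑ j, conj (perp y j) * c i j k‖ ^ 2
      = ∑ i, ‖partialInner c (perp y) z i‖ ^ 2
        + ∑ i, ‖partialInner c (perp y) (perp z) i‖ ^ 2 := by
    simp only [partialInner_eq_sum_comm, ← sum_add_distrib,
      sq_norm_sum_add_sq_norm_sum_perp hz]
  have hsplit_z : ∑ i, ∑ j, ‖∑ k, conj (z k) * c i j k‖ ^ 2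
      = ∑ i, ‖partialInner c y z i‖ ^ 2 + ∑ i, ‖partialInner c (perp y) z i‖ ^ 2 := by
    simp only [partialInner, ← sum_add_distrib, sq_norm_sum_add_sq_norm_sum_perp hy]
  have : 0 ≤ ∑ i, ‖partialInner c y z i‖ ^ 2 := by positivity
  linarith

lemma sq_sum_sq_norm_partialInner_le (c : ι → κ → μ → ℂ) {a : κ → ℂ} {b : μ → ℂ}
    (ha : ∑ j, ‖a j‖ ^ 2 = 1) (hb : ∑ k, ‖b k‖ ^ 2 = 1) :
    (∑ i, ‖partialInner c a b i‖ ^ 2) ^ 2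
      ≤ ∑ j, ∑ k, ‖∑ i, conj (partialInner c a b i) * c i j k‖ ^ 2 := by
  set χ := partialInner c a b
  have hχ : ((∑ i, ‖χ i‖ ^ 2 : ℝ) : ℂ)
      = ∑ p : κ × μ, conj (a p.1) * conj (b p.2) * ∑ i, conj (χ i) * c i p.1 p.2 := by
    push_cast
    simp only [← Complex.conj_mul', Fintype.sum_prod_type]
    exact sum_mul_partialInner c a b _
  calc (∑ i, ‖χ i‖ ^ 2) ^ 2
      = ‖∑ p : κ × μ, conj (a p.1) * conj (b p.2) * ∑ i, conj (χ i) * c i p.1 p.2‖ ^ 2 := by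
        rw [← hχ, Complex.norm_real, Real.norm_of_nonneg (by positivity)]
    _ ≤ (∑ p : κ × μ, ‖conj (a p.1) * conj (b p.2)‖ ^ 2)
          * ∑ p : κ × μ, ‖∑ i, conj (χ i) * c i p.1 p.2‖ ^ 2 := norm_sum_mul_sq_le _ _ _
    _ = _ := by
        simp only [norm_mul, mul_pow, Complex.norm_conj, Fintype.sum_prod_type,
          ← mul_sum, ← sum_mul, ha, hb, one_mul]

end

theorem stmt_14_general (c : Fin 2 → Fin 2 → Fin 2 → ℂ)
    (hnorm : ∑ i, ∑ j, ∑ k, ‖c i j k‖ ^ 2 = 1)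
    (ρ₁ ρ₂ ρ₃ : Matrix (Fin 2) (Fin 2) ℂ)
    (hρ₁ : ρ₁ = Matrix.of fun i i' => ∑ j, ∑ k, c i j k * (starRingEnd ℂ) (c i' j k))
    (hρ₂ : ρ₂ = Matrix.of fun j j' => ∑ i, ∑ k, c i j k * (starRingEnd ℂ) (c i j' k))
    (hρ₃ : ρ₃ = Matrix.of fun k k' => ∑ i, ∑ j, c i j k * (starRingEnd ℂ) (c i j k'))
    (lam₁ lam₂ lam₃ : ℝ)
    (hlam₁ : lam₁ ≤ 1 / 2)
    (hev₁ : ∃ v : Fin 2 → ℂ, v ≠ 0 ∧ ρ₁.mulVec v = (lam₁ : ℂ) • v)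
    (hev₂ : ∃ v : Fin 2 → ℂ, v ≠ 0 ∧ ρ₂.mulVec v = (lam₂ : ℂ) • v)
    (hev₃ : ∃ v : Fin 2 → ℂ, v ≠ 0 ∧ ρ₃.mulVec v = (lam₃ : ℂ) • v) :
    lam₁ ≤ lam₂ + lam₃ := by
  obtain rfl : ρ₁ = reducedDensity c := hρ₁
  obtain rfl : ρ₂ = reducedDensity fun j i k => c i j k := hρ₂
  obtain rfl : ρ₃ = reducedDensity fun k i j => c i j k := hρ₃
  obtain ⟨y, hy, hy_eig⟩ := exists_sum_sq_norm_eq_one_mulVec_eq_smul hev₂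
  obtain ⟨z, hz, hz_eig⟩ := exists_sum_sq_norm_eq_one_mulVec_eq_smul hev₃
  have hq₂ := sum_sq_norm_contract_eq_eigenvalue (fun j i k => c i j k) hy hy_eig
  have hq₃ := sum_sq_norm_contract_eq_eigenvalue (fun k i j => c i j k) hz hz_eig
  set N := ∑ i, ‖partialInner c (perp y) (perp z) i‖ ^ 2
  have hlower : 1 - lam₂ - lam₃ ≤ N := by
    simpa only [hnorm, hq₂, hq₃] using sub_sub_le_sum_sq_norm_partialInner_perp c hy hz
  have hupper : N ^ 2 ≤ (1 - lam₁) * N := by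
    rw [← sum_sq_norm_perp] at hy hz
    exact (sq_sum_sq_norm_partialInner_le c hy hz).trans
      (sum_sq_norm_contract_le_one_sub_eigenvalue c hnorm hlam₁ hev₁ _)
  have hN : 0 ≤ N := by positivity
  nlinarith

theorem stmt_14 (c : Fin 2 → Fin 2 → Fin 2 → ℂ)
    (hnorm : ∑ i, ∑ j, ∑ k, ‖c i j k‖ ^ 2 = 1)
    (ρ₁ ρ₂ ρ₃ : Matrix (Fin 2) (Fin 2) ℂ)
    (hρ₁ : ρ₁ = Matrix.of fun i i' => ∑ j, ∑ k, c i j k * (starRingEnd ℂ) (c i' j k))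
    (hρ₂ : ρ₂ = Matrix.of fun j j' => ∑ i, ∑ k, c i j k * (starRingEnd ℂ) (c i j' k))
    (hρ₃ : ρ₃ = Matrix.of fun k k' => ∑ i, ∑ j, c i j k * (starRingEnd ℂ) (c i j k'))
    (lam₁ lam₂ lam₃ : ℝ)
    (hlam₁ : lam₁ ≤ 1 / 2) (hlam₂ : lam₂ ≤ 1 / 2) (hlam₃ : lam₃ ≤ 1 / 2)
    (hev₁ : ∃ v : Fin 2 → ℂ, v ≠ 0 ∧ ρ₁.mulVec v = (lam₁ : ℂ) • v)
    (hev₂ : ∃ v : Fin 2 → ℂ, v ≠ 0 ∧ ρ₂.mulVec v = (lam₂ : ℂ) • v)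
    (hev₃ : ∃ v : Fin 2 → ℂ, v ≠ 0 ∧ ρ₃.mulVec v = (lam₃ : ℂ) • v) :
    lam₁ ≤ lam₂ + lam₃ :=
  stmt_14_general c hnorm ρ₁ ρ₂ ρ₃ hρ₁ hρ₂ hρ₃ lam₁ lam₂ lam₃ hlam₁ hev₁ hev₂ hev₃
end
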